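/- Let H = (V, E) be a hypergraph whose associated bipartite graph bip H is connected. Then the set function μ on subsets of E defined by μ(E') = |⋃E'| − c(E') (and μ(∅) = 0) is submodular: for all subsets E', E'' ⊆ E one has μ(E' ∪ E'') + μ(E' ∩ E'') ≤ μ(E') + μ(E''). -/
import Mathlib


open SimpleGraph

/-- The bipartite graph associated to a hypergraph with hyperedge set `E`,
vertex set `V`, and incidence function `I`. -/
def bip {V E : Type*} (I : E → Finset V) : SimpleGraph (E ⊕ V) :=
  SimpleGraph.fromRel fun a b =>
    ∃ e v, a = Sum.inl e ∧ b = Sum.inr v ∧ v ∈ I e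

/-- `f : E → ℕ` is a hypertree: there is a spanning tree of `bip I` whose
degree at each `e ∈ E` is `f e + 1`. -/
def IsHypertree {V E : Type*} (I : E → Finset V) (f : E → ℕ) : Prop :=
  ∃ T : SimpleGraph (E ⊕ V), T ≤ bip I ∧ T.IsTree ∧
    ∀ e : E, (T.neighborSet (Sum.inl e)).ncard = f e + 1

/-- The vertex set `E' ⊔ ⋃ E'` of the restriction `bip H |_{E'}`. -/
def suppSet {V E : Type*} (I : E → Finset V) (E' : Finset E) : Set (E ⊕ V) :=
  (Sum.inl '' {e | e ∈ E'}) ∪ (Sum.inr '' {v | ∃ e ∈ E', v ∈ I e})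

/-- `c(E')`: the number of connected components of the induced subgraph of
`bip I` on `E' ⊔ ⋃ E'`. -/
noncomputable def numComp {V E : Type*} (I : E → Finset V) (E' : Finset E) : ℕ :=
  Nat.card ((bip I).induce (suppSet I E')).ConnectedComponent

/-- `μ(E') = |⋃ E'| - c(E')`. -/
noncomputable def mu {V E : Type*} [DecidableEq V] (I : E → Finset V)
    (E' : Finset E) : ℤ :=
  ((E'.biUnion I).card : ℤ) - numComp I E'

section Aux

variable {V E : Type*} [Fintype V] [Fintype E] [DecidableEq V] [DecidableEq E]
  (I : E → Finset V)

lemma mem_suppSet_inl {A : Finset E} {e : E} :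
    (Sum.inl e : E ⊕ V) ∈ suppSet I A ↔ e ∈ A := by
  simp [suppSet]

lemma mem_suppSet_inr {A : Finset E} {v : V} :
    (Sum.inr v : E ⊕ V) ∈ suppSet I A ↔ v ∈ A.biUnion I := by
  simp [suppSet, Finset.mem_biUnion]

lemma bip_adj {a b : E ⊕ V} : (bip I).Adj a b ↔
    (∃ e v, a = Sum.inl e ∧ b = Sum.inr v ∧ v ∈ I e) ∨
      (∃ e v, b = Sum.inl e ∧ a = Sum.inr v ∧ v ∈ I e) := by
  rw [bip, SimpleGraph.fromRel_adj]
  constructor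
  · rintro ⟨_, h⟩; exact h
  · rintro (⟨e, v, rfl, rfl, h⟩ | ⟨e, v, rfl, rfl, h⟩)
    · exact ⟨by simp, Or.inl ⟨e, v, rfl, rfl, h⟩⟩
    · exact ⟨by simp, Or.inr ⟨e, v, rfl, rfl, h⟩⟩

lemma suppSet_mono {A B : Finset E} (h : A ⊆ B) : suppSet I A ⊆ suppSet I B := by
  rintro u (⟨e, he, rfl⟩ | ⟨v, ⟨e, he, hv⟩, rfl⟩)
  · exact Or.inl ⟨e, h he, rfl⟩
  · exact Or.inr ⟨v, ⟨e, h he, hv⟩, rfl⟩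

/-- The inclusion homomorphism between induced subgraphs. -/
def incHom {A B : Finset E} (h : A ⊆ B) :
    (bip I).induce (suppSet I A) →g (bip I).induce (suppSet I B) where
  toFun := Set.inclusion (suppSet_mono I h)
  map_rel' := fun hab => hab

/-- A component of `bip I |_A` is *hit* by `x` if it contains a vertex of `I x`. -/
def Hit (A : Finset E) (x : E)
    (C : ((bip I).induce (suppSet I A)).ConnectedComponent) : Prop :=
  ∃ v ∈ I x, ∃ h : (Sum.inr v : E ⊕ V) ∈ suppSet I A,
    ((bip I).induce (suppSet I A)).connectedComponentMk ⟨Sum.inr v, h⟩ = C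

lemma reach_ind {W : Type*} {G : SimpleGraph W} {p : W → Prop}
    (hp : ∀ a b, G.Adj a b → p a → p b) {a b : W}
    (h : G.Reachable a b) (ha : p a) : p b := by
  obtain ⟨w⟩ := h
  induction w with
  | nil => exact ha
  | cons hadj _ ih => exact ih (hp _ _ hadj ha)

instance (A : Finset E) : Finite ((bip I).induce (suppSet I A)).ConnectedComponent := by
  unfold SimpleGraph.ConnectedComponent
  infer_instance

/-- The key merging identity:
`c(insert x A) + #(components of A hit by x) = c(A) + 1`. -/
lemma merge {A : Finset E} {x : E} (hx : x ∉ A) :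
    numComp I (insert x A) +
      Nat.card {C : ((bip I).induce (suppSet I A)).ConnectedComponent // Hit I A x C}
    = numComp I A + 1 := by
  classical
  set S := suppSet I A with hS
  set T := suppSet I (insert x A) with hT
  have hST : S ⊆ T := suppSet_mono I (Finset.subset_insert x A)
  set GS := (bip I).induce S with hGS
  set GT := (bip I).induce T with hGT
  have hxT : (Sum.inl x : E ⊕ V) ∈ T := (mem_suppSet_inl I).mpr (Finset.mem_insert_self x A)
  set ψ : GS.ConnectedComponent → GT.ConnectedComponent :=
    SimpleGraph.ConnectedComponent.map (incHom I (Finset.subset_insert x A)) with hψ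
  have hψmk : ∀ (u : E ⊕ V) (hu : u ∈ S),
      ψ (GS.connectedComponentMk ⟨u, hu⟩) = GT.connectedComponentMk ⟨u, hST hu⟩ := by
    intro u hu
    rfl
  -- closure of non-hit components under adjacency in GT
  have hclosed : ∀ (C : GS.ConnectedComponent), ¬ Hit I A x C →
      ∀ (a b : T), GT.Adj a b →
        (∃ h : (a : E ⊕ V) ∈ S, GS.connectedComponentMk ⟨a, h⟩ = C) →
        (∃ h : (b : E ⊕ V) ∈ S, GS.connectedComponentMk ⟨b, h⟩ = C) := by
    rintro C hC ⟨a, haT⟩ ⟨b, hbT⟩ hab ⟨haS, hCa⟩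
    have hadj : (bip I).Adj a b := hab
    rcases (bip_adj I).mp hadj with ⟨e, v, rfl, rfl, hv⟩ | ⟨e, v, rfl, rfl, hv⟩
    · -- a = inl e, b = inr v
      have he : e ∈ A := (mem_suppSet_inl I).mp haS
      have hbS : (Sum.inr v : E ⊕ V) ∈ S :=
        (mem_suppSet_inr I).mpr (Finset.mem_biUnion.mpr ⟨e, he, hv⟩)
      refine ⟨hbS, ?_⟩
      rw [← hCa]
      exact (SimpleGraph.ConnectedComponent.connectedComponentMk_eq_of_adj
        (G := GS) (v := ⟨Sum.inr v, hbS⟩) (w := ⟨Sum.inl e, haS⟩) hadj.symm)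
    · -- b = inl e, a = inr v
      have heT : e ∈ insert x A := (mem_suppSet_inl I).mp hbT
      rcases Finset.mem_insert.mp heT with rfl | he
      · exact absurd ⟨v, hv, haS, hCa⟩ hC
      · have hbS : (Sum.inl e : E ⊕ V) ∈ S := (mem_suppSet_inl I).mpr he
        refine ⟨hbS, ?_⟩
        rw [← hCa]
        exact (SimpleGraph.ConnectedComponent.connectedComponentMk_eq_of_adj
          (G := GS) (v := ⟨Sum.inl e, hbS⟩) (w := ⟨Sum.inr v, haS⟩) hadj.symm)
  -- the bijection
  set φ : Option {C : GS.ConnectedComponent // ¬ Hit I A x C} → GT.ConnectedComponent :=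
    fun o => o.elim (GT.connectedComponentMk ⟨Sum.inl x, hxT⟩) (fun C => ψ C.1) with hφ
  have hinj : Function.Injective φ := by
    rintro (_ | ⟨C, hC⟩) (_ | ⟨C', hC'⟩) heq
    · rfl
    · -- φ none = ψ C'
      exfalso
      obtain ⟨⟨u, huS⟩, hu⟩ := C'.exists_rep
      replace hu : GS.connectedComponentMk ⟨u, huS⟩ = C' := hu
      rw [hφ] at heq
      simp only [Option.elim] at heq
      rw [← hu, hψmk u huS] at heq
      have hreach : GT.Reachable ⟨u, hST huS⟩ ⟨Sum.inl x, hxT⟩ :=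
        SimpleGraph.ConnectedComponent.exact heq.symm
      have := reach_ind (hclosed C' hC') hreach ⟨huS, hu⟩
      obtain ⟨hxS, -⟩ := this
      exact hx ((mem_suppSet_inl I).mp hxS)
    · -- ψ C = φ none
      exfalso
      obtain ⟨⟨u, huS⟩, hu⟩ := C.exists_rep
      replace hu : GS.connectedComponentMk ⟨u, huS⟩ = C := hu
      rw [hφ] at heq
      simp only [Option.elim] at heq
      rw [← hu, hψmk u huS] at heq
      have hreach : GT.Reachable ⟨u, hST huS⟩ ⟨Sum.inl x, hxT⟩ :=
        SimpleGraph.ConnectedComponent.exact heq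
      have := reach_ind (hclosed C hC) hreach ⟨huS, hu⟩
      obtain ⟨hxS, -⟩ := this
      exact hx ((mem_suppSet_inl I).mp hxS)
    · -- ψ C = ψ C'
      obtain ⟨⟨u, huS⟩, hu⟩ := C.exists_rep
      obtain ⟨⟨u', huS'⟩, hu'⟩ := C'.exists_rep
      replace hu : GS.connectedComponentMk ⟨u, huS⟩ = C := hu
      replace hu' : GS.connectedComponentMk ⟨u', huS'⟩ = C' := hu'
      rw [hφ] at heq
      simp only [Option.elim] at heq
      rw [← hu, ← hu', hψmk u huS, hψmk u' huS'] at heq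
      have hreach : GT.Reachable ⟨u, hST huS⟩ ⟨u', hST huS'⟩ :=
        SimpleGraph.ConnectedComponent.exact heq
      have := reach_ind (hclosed C hC) hreach ⟨huS, hu⟩
      obtain ⟨hS', hmk⟩ := this
      have hCC : C = C' := by rw [← hmk]; exact hu'
      subst hCC
      rfl
  have hsurj : Function.Surjective φ := by
    intro D
    obtain ⟨⟨u, huT⟩, hDu⟩ := D.exists_rep
    replace hDu : GT.connectedComponentMk ⟨u, huT⟩ = D := hDu
    -- reduce to an `inl` representative
    have hinl : ∃ (e : E) (heT : (Sum.inl e : E ⊕ V) ∈ T),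
        GT.connectedComponentMk ⟨Sum.inl e, heT⟩ = D ∧ e ∈ insert x A := by
      cases u with
      | inl e => exact ⟨e, huT, hDu, (mem_suppSet_inl I).mp huT⟩
      | inr v =>
        obtain ⟨e, he, hv⟩ := Finset.mem_biUnion.mp ((mem_suppSet_inr I).mp huT)
        have heT : (Sum.inl e : E ⊕ V) ∈ T := (mem_suppSet_inl I).mpr he
        have hadj : GT.Adj ⟨Sum.inl e, heT⟩ ⟨Sum.inr v, huT⟩ :=
          (bip_adj I).mpr (Or.inl ⟨e, v, rfl, rfl, hv⟩)
        exact ⟨e, heT,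
          (SimpleGraph.ConnectedComponent.connectedComponentMk_eq_of_adj hadj).trans hDu, he⟩
    obtain ⟨e, heT, hDe, heA⟩ := hinl
    rcases Finset.mem_insert.mp heA with rfl | he
    · exact ⟨none, hDe⟩
    · have heS : (Sum.inl e : E ⊕ V) ∈ S := (mem_suppSet_inl I).mpr he
      set C := GS.connectedComponentMk ⟨Sum.inl e, heS⟩ with hCdef
      by_cases hC : Hit I A x C
      · -- D is the component of `inl x`
        refine ⟨none, ?_⟩
        obtain ⟨v, hvx, hvS, hvC⟩ := hC
        have hreachS : GS.Reachable ⟨Sum.inr v, hvS⟩ ⟨Sum.inl e, heS⟩ :=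
          SimpleGraph.ConnectedComponent.exact (hvC.trans hCdef)
        have hreachT : GT.Reachable ⟨Sum.inr v, hST hvS⟩ ⟨Sum.inl e, hST heS⟩ :=
          hreachS.map (incHom I (Finset.subset_insert x A))
        have hadj : GT.Adj ⟨Sum.inl x, hxT⟩ ⟨Sum.inr v, hST hvS⟩ :=
          (bip_adj I).mpr (Or.inl ⟨x, v, rfl, rfl, hvx⟩)
        have : GT.connectedComponentMk ⟨Sum.inl x, hxT⟩
            = GT.connectedComponentMk ⟨Sum.inl e, hST heS⟩ :=
          (SimpleGraph.ConnectedComponent.connectedComponentMk_eq_of_adj hadj).trans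
            (SimpleGraph.ConnectedComponent.sound hreachT)
        exact this.trans hDe
      · exact ⟨some ⟨C, hC⟩, by
          show ψ C = D
          rw [hCdef, hψmk _ heS]
          exact hDe⟩
  have hbij : Function.Bijective φ := ⟨hinj, hsurj⟩
  have hcard1 : Nat.card (Option {C : GS.ConnectedComponent // ¬ Hit I A x C})
      = numComp I (insert x A) := Nat.card_eq_of_bijective φ hbij
  rw [Finite.card_option] at hcard1
  have hcard2 : Nat.card {C : GS.ConnectedComponent // Hit I A x C}
      + Nat.card {C : GS.ConnectedComponent // ¬ Hit I A x C}
      = numComp I A := by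
    rw [← Nat.card_sum]
    exact Nat.card_congr (Equiv.sumCompl _)
  have hgoal : numComp I (insert x A)
      + Nat.card {C : GS.ConnectedComponent // Hit I A x C} = numComp I A + 1 := by
    omega
  exact hgoal

/-- The number of hit components can only grow in a controlled way. -/
lemma hit_card_le (x : E) {A B : Finset E} (hAB : A ⊆ B) :
    Nat.card {D : ((bip I).induce (suppSet I B)).ConnectedComponent // Hit I B x D}
      ≤ Nat.card {C : ((bip I).induce (suppSet I A)).ConnectedComponent // Hit I A x C}
        + ((I x ∩ B.biUnion I) \ A.biUnion I).card := by
  classical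
  set GS := (bip I).induce (suppSet I A) with hGS
  set GT := (bip I).induce (suppSet I B) with hGT
  set s : Finset V := (I x ∩ B.biUnion I) \ A.biUnion I with hs
  have key : ∀ D : {D : GT.ConnectedComponent // Hit I B x D},
      ∃ y : {C : GS.ConnectedComponent // Hit I A x C} ⊕ ↥s,
        (∀ C hC, y = Sum.inl ⟨C, hC⟩ → ∃ v ∈ I x, ∃ (hA : (Sum.inr v : E ⊕ V) ∈ suppSet I A)
            (hB : (Sum.inr v : E ⊕ V) ∈ suppSet I B),
            GS.connectedComponentMk ⟨Sum.inr v, hA⟩ = C ∧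
            GT.connectedComponentMk ⟨Sum.inr v, hB⟩ = D.1) ∧
        (∀ v hv, y = Sum.inr ⟨v, hv⟩ → ∃ hB : (Sum.inr v : E ⊕ V) ∈ suppSet I B,
            GT.connectedComponentMk ⟨Sum.inr v, hB⟩ = D.1) := by
    rintro ⟨D, hD⟩
    obtain ⟨v, hvx, hvB, hvD⟩ := hD
    by_cases hvA : v ∈ A.biUnion I
    · have hA : (Sum.inr v : E ⊕ V) ∈ suppSet I A := (mem_suppSet_inr I).mpr hvA
      refine ⟨Sum.inl ⟨GS.connectedComponentMk ⟨Sum.inr v, hA⟩, ⟨v, hvx, hA, rfl⟩⟩, ?_, ?_⟩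
      · rintro C hC heq
        exact ⟨v, hvx, hA, hvB, congrArg Subtype.val (Sum.inl.inj heq), hvD⟩
      · rintro v' hv' heq; exact absurd heq (by simp)
    · have hvs : v ∈ s := by
        rw [hs]
        refine Finset.mem_sdiff.mpr ⟨Finset.mem_inter.mpr ⟨hvx, ?_⟩, hvA⟩
        exact (mem_suppSet_inr I).mp hvB
      refine ⟨Sum.inr ⟨v, hvs⟩, ?_, ?_⟩
      · rintro C hC heq; exact absurd heq (by simp)
      · rintro v' hv' heq
        have : v = v' := congrArg Subtype.val (Sum.inr.inj heq)
        subst this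
        exact ⟨hvB, hvD⟩
  choose f hf1 hf2 using key
  have hfinj : Function.Injective f := by
    rintro D D' heq
    rcases h : f D with (⟨C, hC⟩ | ⟨v, hv⟩)
    · have h' : f D' = Sum.inl ⟨C, hC⟩ := by rw [← heq, h]
      obtain ⟨v, hvx, hA, hB, hvC, hvD⟩ := hf1 D C hC h
      obtain ⟨v', hvx', hA', hB', hvC', hvD'⟩ := hf1 D' C hC h'
      -- components of v and v' in GS agree; push to GT
      have hreachS : GS.Reachable ⟨Sum.inr v, hA⟩ ⟨Sum.inr v', hA'⟩ :=
        SimpleGraph.ConnectedComponent.exact (hvC.trans hvC'.symm)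
      have hreachT : GT.Reachable ⟨Sum.inr v, hB⟩ ⟨Sum.inr v', hB'⟩ := by
        have := hreachS.map (incHom I hAB)
        exact this
      have : D.1 = D'.1 := by
        rw [← hvD, ← hvD']
        exact SimpleGraph.ConnectedComponent.sound hreachT
      exact Subtype.ext this
    · have h' : f D' = Sum.inr ⟨v, hv⟩ := by rw [← heq, h]
      obtain ⟨hB, hvD⟩ := hf2 D v hv h
      obtain ⟨hB', hvD'⟩ := hf2 D' v hv h'
      have : D.1 = D'.1 := by rw [← hvD, ← hvD']
      exact Subtype.ext this
  calc Nat.card {D : GT.ConnectedComponent // Hit I B x D}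
      ≤ Nat.card ({C : GS.ConnectedComponent // Hit I A x C} ⊕ ↥s) :=
        Nat.card_le_card_of_injective f hfinj
    _ = Nat.card {C : GS.ConnectedComponent // Hit I A x C} + s.card := by
        rw [Nat.card_sum, Nat.card_eq_finsetCard]

lemma card_split {s t u : Finset V} (h : t ⊆ u) :
    (s \ t).card = (s \ u).card + ((s ∩ u) \ t).card := by
  classical
  rw [← Finset.card_union_of_disjoint]
  · congr 1
    ext v
    simp only [Finset.mem_sdiff, Finset.mem_union, Finset.mem_inter]
    constructor
    · rintro ⟨hs, ht⟩
      by_cases hu : v ∈ u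
      · exact Or.inr ⟨⟨hs, hu⟩, ht⟩
      · exact Or.inl ⟨hs, hu⟩
    · rintro (⟨hs, hu⟩ | ⟨⟨hs, _⟩, ht⟩)
      · exact ⟨hs, fun hv => hu (h hv)⟩
      · exact ⟨hs, ht⟩
  · rw [Finset.disjoint_left]
    intro v hv hmem
    exact (Finset.mem_sdiff.mp hv).2 (Finset.mem_inter.mp (Finset.mem_sdiff.mp hmem).1).2

/-- The diminishing-returns inequality for `μ`. -/
lemma mu_dr {A B : Finset E} (x : E) (hAB : A ⊆ B) (hxB : x ∉ B) :
    mu I (insert x B) - mu I B ≤ mu I (insert x A) - mu I A := by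
  classical
  have hxA : x ∉ A := fun h => hxB (hAB h)
  have hA := merge I hxA
  have hB := merge I hxB
  have hk := hit_card_le I x hAB
  have hbU : A.biUnion I ⊆ B.biUnion I :=
    Finset.biUnion_subset_biUnion_of_subset_left I hAB
  have hsplit := card_split (s := I x) hbU
  have hcardA : ((insert x A).biUnion I).card
      = (I x \ A.biUnion I).card + (A.biUnion I).card := by
    rw [Finset.biUnion_insert]
    exact (Finset.card_sdiff_add_card (I x) (A.biUnion I)).symm
  have hcardB : ((insert x B).biUnion I).card
      = (I x \ B.biUnion I).card + (B.biUnion I).card := by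
    rw [Finset.biUnion_insert]
    exact (Finset.card_sdiff_add_card (I x) (B.biUnion I)).symm
  simp only [mu, hcardA, hcardB]
  push_cast
  omega

/-- Submodularity follows from diminishing returns. -/
lemma submod_of_dr {α : Type*} [DecidableEq α] (f : Finset α → ℤ)
    (h : ∀ (A B : Finset α) (x : α), A ⊆ B → x ∉ B →
      f (insert x B) - f B ≤ f (insert x A) - f A) (A B : Finset α) :
    f (A ∪ B) + f (A ∩ B) ≤ f A + f B := by
  classical
  induction B using Finset.strongInduction generalizing A with
  | _ B ih =>
    by_cases hBA : B ⊆ A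
    · rw [Finset.union_eq_left.mpr hBA, Finset.inter_eq_right.mpr hBA]
    · obtain ⟨x, hxB, hxA⟩ := Finset.not_subset.mp hBA
      set B₀ := B.erase x with hB₀
      have h1 := ih B₀ (Finset.erase_ssubset hxB) A
      have hxAB₀ : x ∉ A ∪ B₀ := by
        simp only [Finset.mem_union, hB₀, Finset.mem_erase]
        push_neg
        exact ⟨hxA, fun h => absurd rfl h⟩
      have h2 := h B₀ (A ∪ B₀) x Finset.subset_union_right hxAB₀
      have e1 : insert x (A ∪ B₀) = A ∪ B := by
        rw [← Finset.union_insert, hB₀, Finset.insert_erase hxB]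
      have e2 : insert x B₀ = B := by rw [hB₀, Finset.insert_erase hxB]
      have e3 : A ∩ B₀ = A ∩ B := by
        ext a
        simp only [Finset.mem_inter, hB₀, Finset.mem_erase]
        constructor
        · rintro ⟨ha, -, hb⟩; exact ⟨ha, hb⟩
        · rintro ⟨ha, hb⟩
          exact ⟨ha, fun hax => hxA (hax ▸ ha), hb⟩
      rw [e1, e2] at h2
      rw [e3] at h1
      linarith

end Aux

/-- The set function `μ` is submodular:
`μ(E' ∪ E'') + μ(E' ∩ E'') ≤ μ(E') + μ(E'')`. -/
theorem mu_submodular {V E : Type*} [Fintype V] [Fintype E] [DecidableEq V]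
    [DecidableEq E] (I : E → Finset V) (hne : ∀ e, (I e).Nonempty)
    (hconn : (bip I).Connected) (E' E'' : Finset E) :
    mu I (E' ∪ E'') + mu I (E' ∩ E'') ≤ mu I E' + mu I E'' := by
  exact submod_of_dr (mu I) (fun A B x hAB hxB => mu_dr I x hAB hxB) E' E''
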